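/- arXiv:2211.06473 — 7 statements merged into one kernel-verified Lean document; each statement's English description precedes it below -/
import Mathlib

section
/- Let R be a noetherian ring, M a left R-module, and f an R-module endomorphism of M. For any finitely generated R-submodule X of M, there exists a least non-negative integer η_f(X) such that for all m ≥ η_f(X), the restriction of f to f^m(X), viewed as a map f^m(X) → f^{m+1}(X), is injective. -/
/-- Fitting Lemma: for a noetherian ring `R`, a left `R`-module `M`, an endomorphism `f`
and a finitely generated submodule `X`, there is a least `k` such that for all `m ≥ k`
the restriction of `f` to `f^m(X)` is injective. -/
theorem stmt0 (R : Type*) [Ring R] [IsNoetherianRing R]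
    (M : Type*) [AddCommGroup M] [Module R M]
    (f : Module.End R M) (X : Submodule R M) (hX : X.FG) :
    ∃ k : ℕ, (∀ m ≥ k, Set.InjOn f (Submodule.map (f ^ m) X : Set M)) ∧
      ∀ k' : ℕ, (∀ m ≥ k', Set.InjOn f (Submodule.map (f ^ m) X : Set M)) → k ≤ k' := by
  classical
  have hN : IsNoetherian R X := isNoetherian_of_fg_of_noetherian X hX
  have hker : ∀ {a b : ℕ}, a ≤ b → LinearMap.ker (f ^ a) ≤ LinearMap.ker (f ^ b) := by
    intro a b hab x hx
    have hfb : f ^ b = f ^ (b - a) * f ^ a := by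
      rw [← pow_add]; congr 1; omega
    simp only [LinearMap.mem_ker] at hx ⊢
    rw [hfb]
    simp [Module.End.mul_apply, hx]
  let c : ℕ →o Submodule R X :=
    ⟨fun m => Submodule.comap X.subtype (LinearMap.ker (f ^ m)),
     fun a b hab => Submodule.comap_mono (hker hab)⟩
  obtain ⟨n, hn⟩ := monotone_stabilizes_iff_noetherian.mpr hN c
  have hP : ∀ m ≥ n, Set.InjOn f (Submodule.map (f ^ m) X : Set M) := by
    intro m hm a ha b hb hfab
    obtain ⟨x, hx, rfl⟩ := ha
    obtain ⟨y, hy, rfl⟩ := hb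
    have hxy : x - y ∈ X := X.sub_mem hx hy
    have h1 : (⟨x - y, hxy⟩ : X) ∈ c (m + 1) := by
      show x - y ∈ LinearMap.ker (f ^ (m + 1))
      simp only [LinearMap.mem_ker, map_sub, pow_succ']
      simp only [Module.End.mul_apply]
      rw [sub_eq_zero]
      exact hfab
    have h2 : (⟨x - y, hxy⟩ : X) ∈ c m := by
      rw [← hn m hm, hn (m + 1) (le_trans hm (Nat.le_succ m))]
      exact h1
    have h3 : (f ^ m) (x - y) = 0 := h2
    rw [map_sub, sub_eq_zero] at h3
    exact h3
  have he : ∃ k : ℕ, ∀ m ≥ k, Set.InjOn f (Submodule.map (f ^ m) X : Set M) := ⟨n, hP⟩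
  exact ⟨Nat.find he, Nat.find_spec he, fun k' hk' => Nat.find_le hk'⟩
end

section
/- Let G be a finitely generated free abelian group of rank m and let Ω : G → G be a group endomorphism (more generally, let Ω be an endomorphism of an abelian group H with G ⊆ H and Ω(G) ⊆ G). Then there exists k ≤ m such that for all n ≥ k, the restriction of Ω to Ω^n(G), as a map Ω^n(G) → Ω^{n+1}(G), is injective. In other words, η_Ω(G) ≤ m where η_Ω(G) is the least such k. -/
/-!
On `Ω^n(G)`, `Ω` is injective exactly when `ker Ω^(n+1) ∩ G = ker Ω^n ∩ G`. Over `ℚ`, the kernels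
of the powers of an endomorphism of an `m`-dimensional space stabilise from the `m`-th power on,
and a free `ℤ`-module embeds into its rationalisation `ℚ ⊗ G`, so the same holds on `G`.
-/

open Module TensorProduct

theorem Module.Free.tensorProduct_mk_one_injective {R M : Type*} (K : Type*) [CommRing R]
    [Field K] [Algebra R K] [IsFractionRing R K] [AddCommGroup M] [Module R M] [Module.Free R M] :
    Function.Injective (TensorProduct.mk R K M 1) := by
  intro x y hxy
  let b := Module.Free.chooseBasis R M
  refine b.ext_elem fun i ↦ IsFractionRing.injective R K ?_
  simpa [Algebra.algebraMap_eq_smul_one] using congr((b.baseChange K).repr $hxy i)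

theorem Module.End.ker_pow_eq_ker_pow_finrank_of_le_of_free {R M : Type*} [CommRing R]
    [IsDomain R] [AddCommGroup M] [Module R M] [Module.Free R M] [Module.Finite R M]
    {f : Module.End R M} {n : ℕ} (hn : finrank R M ≤ n) :
    LinearMap.ker (f ^ n) = LinearMap.ker (f ^ finrank R M) := by
  let K := FractionRing R
  have pow_eq_zero_iff (k : ℕ) (x : M) : (f ^ k) x = 0 ↔ (f.baseChange K ^ k) (1 ⊗ₜ x) = 0 := by
    rw [← LinearMap.baseChange_pow, LinearMap.baseChange_tmul, ← TensorProduct.mk_apply,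
      map_eq_zero_iff _ (Module.Free.tensorProduct_mk_one_injective K)]
  have ker_baseChange_pow :
      LinearMap.ker (f.baseChange K ^ n) = LinearMap.ker (f.baseChange K ^ finrank R M) := by
    rw [← Module.finrank_baseChange (R := K)]
    exact Module.End.ker_pow_eq_ker_pow_finrank_of_le (by rwa [Module.finrank_baseChange])
  ext x
  rw [LinearMap.mem_ker, LinearMap.mem_ker, pow_eq_zero_iff, pow_eq_zero_iff,
    ← LinearMap.mem_ker, ker_baseChange_pow, LinearMap.mem_ker]

theorem AddMonoid.End.injOn_map_pow {H : Type*} [AddCommGroup H] {Ω : AddMonoid.End H}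
    {G : AddSubgroup H} {n : ℕ} (h : ∀ x ∈ G, (Ω ^ (n + 1)) x = 0 → (Ω ^ n) x = 0) :
    Set.InjOn Ω (G.map (Ω ^ n) : Set H) := by
  rintro _ ⟨x, hx, rfl⟩ _ ⟨y, hy, rfl⟩ hxy
  have hsub := h (x - y) (G.sub_mem hx hy) (by
    rw [map_sub, pow_succ', sub_eq_zero]
    exact hxy)
  rwa [map_sub, sub_eq_zero] at hsub

/-- If `G` is a subgroup of an abelian group, invariant under an endomorphism `Ω`,
and `G` is free abelian of rank `m`, then there is `k ≤ m` such that for all `n ≥ k`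
the restriction of `Ω` to `Ω^n(G)` is injective; i.e. `η_Ω(G) ≤ m`. -/
theorem stmt2 (H : Type*) [AddCommGroup H] (Ω : AddMonoid.End H) (G : AddSubgroup H)
    (hinv : ∀ x ∈ G, Ω x ∈ G) (m : ℕ) (b : Module.Basis (Fin m) ℤ G) :
    ∃ k ≤ m, ∀ n ≥ k, Set.InjOn Ω (AddSubgroup.map (Ω ^ n) G : Set H) := by
  let φ : Module.End ℤ G := ((Ω.domRestrict G).codRestrict G fun x ↦ hinv x x.2).toIntLinearMap
  have coe_pow_apply (n : ℕ) (x : G) : ((φ ^ n) x : H) = (Ω ^ n) x := by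
    rw [Module.End.pow_apply, AddMonoid.End.coe_pow]
    exact Function.Semiconj.iterate_right (f := Subtype.val) (fun _ ↦ rfl) n x
  have : Module.Free ℤ G := .of_basis b
  have : Module.Finite ℤ G := .of_basis b
  have finrank_G : finrank ℤ G = m := by simp [finrank_eq_card_basis b]
  refine ⟨m, le_rfl, fun n hn ↦ AddMonoid.End.injOn_map_pow fun x hx hx0 ↦ ?_⟩
  have ker_pow_succ : LinearMap.ker (φ ^ (n + 1)) = LinearMap.ker (φ ^ n) := by
    rw [Module.End.ker_pow_eq_ker_pow_finrank_of_le_of_free (n := n + 1) (by omega),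
      Module.End.ker_pow_eq_ker_pow_finrank_of_le_of_free (n := n) (by omega)]
  have hmem : (⟨x, hx⟩ : G) ∈ LinearMap.ker (φ ^ (n + 1)) := by
    rwa [LinearMap.mem_ker, ← ZeroMemClass.coe_eq_zero, coe_pow_apply]
  rwa [ker_pow_succ, LinearMap.mem_ker, ← ZeroMemClass.coe_eq_zero, coe_pow_apply] at hmem
end

section
/- Let H be a free abelian group, Ω : H → H a group endomorphism, and G ⊆ H a finitely generated subgroup such that some iterate Ω^n(G) is contained in a finitely generated subgroup K of H with Ω(K) ⊆ K. Then η_Ω(G) is finite, i.e., there exists k such that for all m ≥ k the restriction Ω|_{Ω^m(G)} : Ω^m(G) → Ω^{m+1}(G) is injective. -/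
/-!
The kernels of the powers of an endomorphism of a Noetherian module stabilize, so for large `j`
the kernel of `Ω` meets the image of `Ω ^ j` only in `0`. Applied to the restriction of `Ω` to
the finitely generated, hence Noetherian, `ℤ`-module `K`, this makes `Ω` injective on
`Ω ^ j (K)`, which contains `Ω ^ (j + n) (G)`.
-/

open Filter

namespace Module.End

variable {R M : Type*} [Ring R] [AddCommGroup M] [Module R M]

theorem eventually_disjoint_ker_range_pow [IsNoetherian R M] (f : End R M) :
    ∀ᶠ j in atTop, Disjoint (LinearMap.ker f) (LinearMap.range (f ^ j)) := by
  filter_upwards [f.eventually_disjoint_ker_pow_range_pow, eventually_ge_atTop 1] with j hj hj1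
  obtain ⟨i, rfl⟩ := Nat.exists_eq_add_of_le' hj1
  exact hj.mono_left (pow_succ f i ▸ LinearMap.ker_le_ker_comp f (f ^ i))

theorem eventually_injOn_map_pow {N : Submodule R M} [IsNoetherian R N] (f : End R M)
    (hN : ∀ x ∈ N, f x ∈ N) :
    ∀ᶠ j in atTop, Set.InjOn f (N.map (f ^ j)) := by
  filter_upwards [eventually_disjoint_ker_range_pow (f.restrict hN)] with j hj
  refine LinearMap.disjoint_ker_iff_injOn.mp (Submodule.disjoint_def.mpr ?_)
  rintro _ ⟨x, hx, rfl⟩ hfx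
  have hcoe (u : N) : ((f.restrict hN ^ j) u : M) = (f ^ j) u := by
    rw [pow_restrict]; rfl
  have hx_ker : (f.restrict hN ^ j) ⟨x, hx⟩ = 0 :=
    Submodule.disjoint_def.mp hj _ (Subtype.ext (by simpa [hcoe] using hfx)) ⟨⟨x, hx⟩, rfl⟩
  simpa [hcoe] using congrArg Subtype.val hx_ker

end Module.End

theorem stmt3_general (H : Type*) [AddCommGroup H] (Ω : AddMonoid.End H)
    (G K : AddSubgroup H) (hK : K.FG) (hKinv : ∀ x ∈ K, Ω x ∈ K)
    (n : ℕ) (hn : AddSubgroup.map (Ω ^ n) G ≤ K) :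
    ∃ k : ℕ, ∀ m ≥ k, Set.InjOn Ω (AddSubgroup.map (Ω ^ m) G : Set H) := by
  have : IsNoetherian ℤ K.toIntSubmodule :=
    isNoetherian_of_fg_of_noetherian _ ((Submodule.fg_iff_addSubgroup_fg _).mpr hK)
  obtain ⟨j₀, hj₀⟩ := eventually_atTop.mp
    (Module.End.eventually_injOn_map_pow (N := K.toIntSubmodule) Ω.toIntLinearMap hKinv)
  refine ⟨n + j₀, fun m hm => (hj₀ (m - n) (by omega)).mono ?_⟩
  rintro _ ⟨x, hx, rfl⟩
  refine ⟨(Ω ^ n) x, hn ⟨x, hx, rfl⟩, ?_⟩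
  obtain ⟨i, rfl⟩ := Nat.exists_eq_add_of_le' (by omega : n ≤ m)
  rw [Nat.add_sub_cancel, pow_add, Module.End.coe_pow]
  exact congrFun (AddMonoid.End.coe_pow (M := H) Ω i).symm _

/-- If `G` is a finitely generated subgroup of a free abelian group `H` which is syzygy
finite (some iterate `Ω^n(G)` lands in a finitely generated `Ω`-invariant subgroup `K`),
then `η_Ω(G)` is finite. -/
theorem stmt3 (H : Type*) [AddCommGroup H] [Module.Free ℤ H] (Ω : AddMonoid.End H)
    (G K : AddSubgroup H) (hG : G.FG) (hK : K.FG) (hKinv : ∀ x ∈ K, Ω x ∈ K)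
    (n : ℕ) (hn : AddSubgroup.map (Ω ^ n) G ≤ K) :
    ∃ k : ℕ, ∀ m ≥ k, Set.InjOn Ω (AddSubgroup.map (Ω ^ m) G : Set H) :=
  stmt3_general H Ω G K hK hKinv n hn
end

section
/- Let H be a free abelian group, Ω : H → H a group endomorphism, and G a finitely generated subgroup of H with η_Ω(G) < ∞. Then η_Ω(G) ≤ η_Ω(⟨Ω(G)⟩) + 1, where ⟨Ω(G)⟩ denotes the subgroup generated by Ω(G). (This is the abstract form of the Igusa-Todorov inequality φ(M) ≤ φ(Ω M) + 1.) -/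
theorem AddSubgroup.map_pow_succ_eq_map_pow_map {H : Type*} [AddGroup H] (Ω : AddMonoid.End H)
    (G : AddSubgroup H) (n : ℕ) :
    G.map (Ω ^ (n + 1)) = (G.map Ω).map (Ω ^ n) := by
  rw [pow_succ]
  exact (G.map_map (Ω ^ n) Ω).symm

theorem stmt5_general (H : Type*) [AddCommGroup H] (Ω : AddMonoid.End H)
    (G : AddSubgroup H) (kG kΩG : ℕ)
    (hkG : IsLeast {k : ℕ | ∀ m ≥ k, Set.InjOn Ω (AddSubgroup.map (Ω ^ m) G : Set H)} kG)
    (hkΩG : IsLeast {k : ℕ | ∀ m ≥ k,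
      Set.InjOn Ω (AddSubgroup.map (Ω ^ m) (AddSubgroup.map Ω G) : Set H)} kΩG) :
    kG ≤ kΩG + 1 := by
  apply hkG.2
  rintro (_ | n) hn
  · omega
  · rw [G.map_pow_succ_eq_map_pow_map]
    exact hkΩG.1 n (by omega)

/-- Abstract form of `φ(M) ≤ φ(ΩM) + 1`: for a finitely generated subgroup `G` of a free
abelian group `H` and an endomorphism `Ω`, `η_Ω(G) ≤ η_Ω(⟨Ω(G)⟩) + 1`. -/
theorem stmt5 (H : Type*) [AddCommGroup H] [Module.Free ℤ H] (Ω : AddMonoid.End H)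
    (G : AddSubgroup H) (hG : G.FG) (kG kΩG : ℕ)
    (hkG : IsLeast {k : ℕ | ∀ m ≥ k, Set.InjOn Ω (AddSubgroup.map (Ω ^ m) G : Set H)} kG)
    (hkΩG : IsLeast {k : ℕ | ∀ m ≥ k,
      Set.InjOn Ω (AddSubgroup.map (Ω ^ m) (AddSubgroup.map Ω G) : Set H)} kΩG) :
    kG ≤ kΩG + 1 :=
  stmt5_general H Ω G kG kΩG hkG hkΩG
end

section
/- Let H be a free abelian group with basis B, and let Ω : H → H be a group endomorphism mapping each basis element either to 0 or to a non-negative linear combination of basis elements (so that 'Ω^n(v) = 0' makes sense for generators v of a subgroup generated by basis elements). For a subgroup G of H generated by a finite subset S of B with η_Ω(G) < ∞, one has: η_Ω(G) = max{ n ∈ ℕ : there exists v ∈ G with Ω^n(v) = 0 and Ω^{n-1}(v) ≠ 0 }, provided this set is nonempty; if Ω is injective on G and all its iterates, then η_Ω(G) = 0. -/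
/-! `Ω` is injective on `Ωᵐ(G)` exactly when no `v ∈ G` satisfies `Ωᵐ⁺¹ v = 0 ≠ Ωᵐ v`, i.e. exactly
when `m + 1` is not a "killing step" of `G`. Hence `η_Ω(G)`, the least `k` with `Ω` injective on
all `Ωᵐ(G)` for `m ≥ k`, is the least upper bound of the killing steps. -/

theorem AddSubgroup.injOn_iff_forall_map_eq_zero {H H' : Type*} [AddGroup H] [AddGroup H']
    (f : H →+ H') (K : AddSubgroup H) :
    Set.InjOn f K ↔ ∀ x ∈ K, f x = 0 → x = 0 := by
  refine ⟨fun hf x hx hfx => hf hx K.zero_mem (by rw [hfx, map_zero]), fun h x hx y hy hxy => ?_⟩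
  rw [← sub_eq_zero]
  exact h _ (K.sub_mem hx hy) (by rw [map_sub, hxy, sub_self])

namespace AddMonoid.End

variable {H : Type*} [AddGroup H] (f : AddMonoid.End H) (G : AddSubgroup H)

def killingSteps : Set ℕ :=
  {n | ∃ v ∈ G, (f ^ n) v = 0 ∧ (f ^ (n - 1)) v ≠ 0}

theorem zero_notMem_killingSteps : 0 ∉ f.killingSteps G := by
  rintro ⟨v, -, hv, hv'⟩
  exact hv' hv

theorem injOn_map_pow_iff_succ_notMem_killingSteps (m : ℕ) :
    Set.InjOn f (G.map (f ^ m) : Set H) ↔ m + 1 ∉ f.killingSteps G := by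
  refine (AddSubgroup.injOn_iff_forall_map_eq_zero f _).trans ⟨?_, ?_⟩
  · rintro hinj ⟨v, hv, hv0, hv1⟩
    rw [Nat.add_sub_cancel] at hv1
    exact hv1 (hinj _ ⟨v, hv, rfl⟩ (by rwa [pow_succ'] at hv0))
  · rintro h _ ⟨v, hv, rfl⟩ hfv
    by_contra hne
    exact h ⟨v, hv, by rw [pow_succ']; exact hfv, by rw [Nat.add_sub_cancel]; exact hne⟩

theorem setOf_forall_ge_injOn_eq_upperBounds :
    {k | ∀ m ≥ k, Set.InjOn f (G.map (f ^ m) : Set H)} = upperBounds (f.killingSteps G) := by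
  ext k
  refine ⟨fun h n hn => ?_, fun h m hm => ?_⟩
  · obtain ⟨m, rfl⟩ := Nat.exists_eq_succ_of_ne_zero
      (ne_of_mem_of_not_mem hn (f.zero_notMem_killingSteps G))
    by_contra! hlt
    exact (f.injOn_map_pow_iff_succ_notMem_killingSteps G m).1 (h m (by omega)) hn
  · exact (f.injOn_map_pow_iff_succ_notMem_killingSteps G m).2
      fun hmem => absurd (h hmem) (by omega)

end AddMonoid.End

theorem stmt6_general (H : Type*) [AddCommGroup H]
    (Ω : AddMonoid.End H)
    (G : AddSubgroup H)
    (k : ℕ)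
    (hk : IsLeast {k : ℕ | ∀ m ≥ k, Set.InjOn Ω (AddSubgroup.map (Ω ^ m) G : Set H)} k) :
    (({n : ℕ | ∃ v ∈ G, (Ω ^ n) v = 0 ∧ (Ω ^ (n - 1)) v ≠ 0}).Nonempty →
      k = sSup {n : ℕ | ∃ v ∈ G, (Ω ^ n) v = 0 ∧ (Ω ^ (n - 1)) v ≠ 0}) ∧
    ((∀ m : ℕ, Set.InjOn Ω (AddSubgroup.map (Ω ^ m) G : Set H)) → k = 0) := by
  have hlub : IsLeast (upperBounds (Ω.killingSteps G)) k :=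
    Ω.setOf_forall_ge_injOn_eq_upperBounds G ▸ hk
  refine ⟨fun hne => (IsLUB.csSup_eq hlub hne).symm, fun hinj => ?_⟩
  exact Nat.le_zero.mp (hk.2 fun m _ => hinj m)

/-- Abstract form of the characterization of the Igusa-Todorov function:
for a free abelian group `H` with basis `B`, an endomorphism `Ω` mapping each basis element
to `0` or to a non-negative combination of basis elements, and `G` generated by a finite
subset of the basis with `η_Ω(G) = k` finite, `k` is the maximum of the `n` with
`Ω^n(v) = 0 ≠ Ω^{n-1}(v)` for some `v ∈ G`, when such `n` exist; and `k = 0` if all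
restrictions of `Ω` are injective. -/
theorem stmt6 (H : Type*) [AddCommGroup H] (ι : Type*) (B : Module.Basis ι ℤ H)
    (Ω : AddMonoid.End H)
    (hΩ : ∀ i, Ω (B i) = 0 ∨ ∃ c : ι →₀ ℕ, Ω (B i) = c.sum fun j n => (n : ℤ) • B j)
    (S : Finset ι) (G : AddSubgroup H) (hG : G = AddSubgroup.closure (⇑B '' (S : Set ι)))
    (k : ℕ)
    (hk : IsLeast {k : ℕ | ∀ m ≥ k, Set.InjOn Ω (AddSubgroup.map (Ω ^ m) G : Set H)} k) :
    (({n : ℕ | ∃ v ∈ G, (Ω ^ n) v = 0 ∧ (Ω ^ (n - 1)) v ≠ 0}).Nonempty →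
      k = sSup {n : ℕ | ∃ v ∈ G, (Ω ^ n) v = 0 ∧ (Ω ^ (n - 1)) v ≠ 0}) ∧
    ((∀ m : ℕ, Set.InjOn Ω (AddSubgroup.map (Ω ^ m) G : Set H)) → k = 0) :=
  stmt6_general H Ω G k hk
end

section
/- Let H = H_A × H_B × H_O be a product of abelian groups and Ω : H → H a group endomorphism such that Ω(a, 0, 0) = (Ω_A(a), 0, n_a), Ω(0, b, 0) = (0, Ω_B(b), n_b), and Ω(0, 0, c) ∈ {0} × {0} × H_O, for endomorphisms Ω_A of H_A, Ω_B of H_B, and appropriate elements n_a, n_b ∈ H_O. Suppose there exists m such that for every a in a given subgroup G_A ⊆ H_A, Ω_A^k(a) stabilizes to 0 whenever it is eventually 0 within m steps (i.e., η_{Ω_A} on finitely generated subgroups of G_A is bounded by m), similarly for Ω_B on G_B ⊆ H_B with the same bound m, and suppose there exists N such that for every c ∈ H_O with Ω^k(0,0,c) = 0 for some k, already Ω^N(0,0,c) = 0. Then for every v = (v_1, v_2, v_3) ∈ G_A × G_B × H_O with Ω^n(v) = 0 for some n, one has Ω^{m+N}(v) = 0. -/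
/-- Abstract skeleton of Theorem 3.3: the endomorphism `Ω` of `H_A × H_B × H_O` acts
triangularly; nilpotence bounds `m` on the `A`- and `B`-parts and `N` on the orbit part
combine to a global nilpotence bound `m + N`. -/
theorem stmt7 (HA HB HO : Type*) [AddCommGroup HA] [AddCommGroup HB] [AddCommGroup HO]
    (Ω : AddMonoid.End (HA × HB × HO)) (ΩA : AddMonoid.End HA) (ΩB : AddMonoid.End HB)
    (hA : ∀ a : HA, (Ω (a, 0, 0)).1 = ΩA a ∧ (Ω (a, 0, 0)).2.1 = 0)
    (hB : ∀ b : HB, (Ω (0, b, 0)).1 = 0 ∧ (Ω (0, b, 0)).2.1 = ΩB b)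
    (hO : ∀ c : HO, (Ω (0, 0, c)).1 = 0 ∧ (Ω (0, 0, c)).2.1 = 0)
    (GA : AddSubgroup HA) (GB : AddSubgroup HB) (m : ℕ)
    (hmA : ∀ a ∈ GA, (∃ k, (ΩA ^ k) a = 0) → (ΩA ^ m) a = 0)
    (hmB : ∀ b ∈ GB, (∃ k, (ΩB ^ k) b = 0) → (ΩB ^ m) b = 0)
    (N : ℕ)
    (hN : ∀ c : HO, (∃ k, (Ω ^ k) (0, 0, c) = 0) → (Ω ^ N) (0, 0, c) = 0) :
    ∀ v : HA × HB × HO, v.1 ∈ GA → v.2.1 ∈ GB →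
      (∃ n, (Ω ^ n) v = 0) → (Ω ^ (m + N)) v = 0 := by
  -- one-step triangularity
  have step : ∀ w : HA × HB × HO, (Ω w).1 = ΩA w.1 ∧ (Ω w).2.1 = ΩB w.2.1 := by
    intro ⟨a, b, c⟩
    have hsum : (a, b, c) = ((a, 0, 0) : HA × HB × HO) + (0, b, 0) + (0, 0, c) := by
      simp [Prod.ext_iff]
    rw [hsum, map_add, map_add]
    refine ⟨?_, ?_⟩
    · rw [Prod.fst_add, Prod.fst_add, (hA a).1, (hB b).1, (hO c).1, add_zero, add_zero]
      simp
    · rw [Prod.snd_add, Prod.snd_add, Prod.fst_add, Prod.fst_add, (hA a).2, (hB b).2,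
        (hO c).2, zero_add, add_zero]
      simp
  -- iterated triangularity
  have iter : ∀ (k : ℕ) (w : HA × HB × HO),
      ((Ω ^ k) w).1 = (ΩA ^ k) w.1 ∧ ((Ω ^ k) w).2.1 = (ΩB ^ k) w.2.1 := by
    intro k
    induction k with
    | zero => intro w; simp
    | succ k ih =>
      intro w
      have h1 : (Ω ^ (k + 1)) w = (Ω ^ k) (Ω w) := by
        rw [pow_succ]; rfl
      have h2 : (ΩA ^ (k + 1)) w.1 = (ΩA ^ k) ((Ω w).1) := by
        rw [pow_succ, (step w).1]; rfl
      have h3 : (ΩB ^ (k + 1)) w.2.1 = (ΩB ^ k) ((Ω w).2.1) := by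
        rw [pow_succ, (step w).2]; rfl
      rw [h1, h2, h3]
      exact ih (Ω w)
  rintro v hvA hvB ⟨n, hn⟩
  have hA0 : (ΩA ^ m) v.1 = 0 := by
    apply hmA _ hvA
    exact ⟨n, by rw [← (iter n v).1, hn]; rfl⟩
  have hB0 : (ΩB ^ m) v.2.1 = 0 := by
    apply hmB _ hvB
    exact ⟨n, by rw [← (iter n v).2, hn]; rfl⟩
  set w := (Ω ^ m) v with hw
  have hw1 : w.1 = 0 := by rw [hw, (iter m v).1, hA0]
  have hw2 : w.2.1 = 0 := by rw [hw, (iter m v).2, hB0]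
  have hwform : w = (0, 0, w.2.2) := by
    ext <;> simp [hw1, hw2]
  have hkey : (Ω ^ N) w = 0 := by
    rw [hwform]
    apply hN
    refine ⟨n, ?_⟩
    rw [← hwform, hw]
    show (Ω ^ n * Ω ^ m) v = 0
    rw [← pow_add, add_comm, pow_add]
    show (Ω ^ m) ((Ω ^ n) v) = 0
    rw [hn, map_zero]
  rw [add_comm, pow_add]
  exact hkey
end

section
/- Let H_A, H_B, H_O be abelian groups with endomorphisms, and let Ω be an endomorphism of H = H_A × H_B × H_O satisfying: Ω(a, b, c) = (Ω_A(a), Ω_B(b), r(a,b,c)) for some homomorphism r : H → H_O. Suppose m ∈ ℕ is such that for all a ∈ H_A, if Ω_A^k(a) = 0 for some k then Ω_A^m(a) = 0, and similarly for Ω_B; and suppose s ∈ ℕ is such that for all c ∈ H_O, if Ω^k(0,0,c) = (0,0,0) for some k and H_O is Ω-stable in the third coordinate (Ω(0,0,c) ∈ {0}×{0}×H_O), then Ω^s(0,0,c) = (0,0,0). Then every v ∈ H with Ω^n(v) = 0 for some n satisfies Ω^{m+s}(v) = 0; in particular the supremum of {n : ∃v, Ω^{n}(v)=0, Ω^{n-1}(v)≠0}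 is at most m + s. -/
private lemma endMulApply {M : Type*} [AddCommMonoid M] (f g : AddMonoid.End M) (v : M) :
    (f * g) v = f (g v) := rfl

private lemma endPowAdd {M : Type*} [AddCommMonoid M] (f : AddMonoid.End M) (a b : ℕ) (v : M) :
    (f ^ (a + b)) v = (f ^ a) ((f ^ b) v) := by
  rw [pow_add]; rfl

/-- Key combinatorial lemma behind Theorem 3.3: `Ω` acts block-triangularly on
`H_A × H_B × H_O`, with nilpotence bound `m` on the `A`- and `B`-blocks and `s` on the
orbit block; then every eventually vanishing element vanishes after `m + s` steps, and
the `φ`-type supremum is at most `m + s`. -/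
theorem stmt11 (HA HB HO : Type*) [AddCommGroup HA] [AddCommGroup HB] [AddCommGroup HO]
    (Ω : AddMonoid.End (HA × HB × HO)) (ΩA : AddMonoid.End HA) (ΩB : AddMonoid.End HB)
    (r : HA × HB × HO →+ HO)
    (hΩ : ∀ v : HA × HB × HO, Ω v = (ΩA v.1, ΩB v.2.1, r v))
    (m : ℕ) (hmA : ∀ a : HA, (∃ k, (ΩA ^ k) a = 0) → (ΩA ^ m) a = 0)
    (hmB : ∀ b : HB, (∃ k, (ΩB ^ k) b = 0) → (ΩB ^ m) b = 0)
    (s : ℕ)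
    (hs : ∀ c : HO, (∃ k, (Ω ^ k) ((0 : HA), (0 : HB), c) = 0) → (Ω ^ s) (0, 0, c) = 0) :
    (∀ v : HA × HB × HO, (∃ n, (Ω ^ n) v = 0) → (Ω ^ (m + s)) v = 0) ∧
    ∀ n : ℕ, (∃ v : HA × HB × HO, (Ω ^ n) v = 0 ∧ (Ω ^ (n - 1)) v ≠ 0) → n ≤ m + s := by
  have coords : ∀ (n : ℕ) (v : HA × HB × HO),
      ((Ω ^ n) v).1 = (ΩA ^ n) v.1 ∧ ((Ω ^ n) v).2.1 = (ΩB ^ n) v.2.1 := by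
    intro n
    induction n with
    | zero => intro v; simp
    | succ k ih =>
      intro v
      have h1 : (Ω ^ (k + 1)) v = (Ω ^ k) (Ω v) := by
        rw [pow_succ, endMulApply]
      have h2 := ih (Ω v)
      rw [hΩ v] at h2
      rw [h1, hΩ v]
      constructor
      · rw [h2.1, pow_succ, endMulApply]
      · rw [h2.2, pow_succ, endMulApply]
  have main : ∀ v : HA × HB × HO, (∃ n, (Ω ^ n) v = 0) → (Ω ^ (m + s)) v = 0 := by
    intro v ⟨n, hn⟩
    have hA : (ΩA ^ m) v.1 = 0 := by
      apply hmA; exact ⟨n, by rw [← (coords n v).1, hn]; rfl⟩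
    have hB : (ΩB ^ m) v.2.1 = 0 := by
      apply hmB; exact ⟨n, by rw [← (coords n v).2, hn]; rfl⟩
    have hm : (Ω ^ m) v = (0, 0, ((Ω ^ m) v).2.2) := by
      have := coords m v
      ext
      · rw [this.1, hA]
      · rw [this.2, hB]
      · rfl
    have hkey : (Ω ^ s) ((0 : HA), (0 : HB), ((Ω ^ m) v).2.2) = 0 := by
      apply hs
      refine ⟨n, ?_⟩
      rw [← hm, ← endPowAdd, Nat.add_comm, endPowAdd, hn, map_zero]
    calc (Ω ^ (m + s)) v = (Ω ^ s) ((Ω ^ m) v) := by rw [Nat.add_comm, endPowAdd]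
      _ = 0 := by rw [hm]; exact hkey
  refine ⟨main, ?_⟩
  intro n ⟨v, hn, hn1⟩
  by_contra h
  push_neg at h
  apply hn1
  have hms : (Ω ^ (m + s)) v = 0 := main v ⟨n, hn⟩
  have heq : n - 1 = (n - 1 - (m + s)) + (m + s) := by omega
  rw [heq, endPowAdd, hms, map_zero]
end
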